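/- arXiv:2412.01326 — 8 statements merged into one kernel-verified Lean document; each statement's English description precedes it below -/
import Mathlib

section
/- Let K ⊆ ℝ^n be a nonempty closed convex set, d : ℝ^n → ℝ a differentiable m-strongly convex function (m > 0), and c > 0. Then for every η ∈ ℝ^n: (i) φ^c(λ, η) ≥ 0 for all λ ∈ K; and (ii) for λ ∈ K, φ^c(λ, η) = 0 if and only if λ ∈ SOL(K, η), i.e. ⟨ω − λ, η⟩ ≥ 0 for all ω ∈ K. -/
open scoped RealInnerProductSpace

/-- Auchmuty's function `L^c(λ, η, ω) = c·d(λ) − c·d(ω) + ⟨η − c·∇d(λ), λ − ω⟩`. -/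
noncomputable def Auchmuty {n : ℕ} (c : ℝ) (d : EuclideanSpace ℝ (Fin n) → ℝ)
    (lam eta om : EuclideanSpace ℝ (Fin n)) : ℝ :=
  c * d lam - c * d om + ⟪eta - c • gradient d lam, lam - om⟫

/-- The generalized primal gap function `φ^c(λ, η) = sup_{ω ∈ K} L^c(λ, η, ω)`. -/
noncomputable def primalGap {n : ℕ} (K : Set (EuclideanSpace ℝ (Fin n))) (c : ℝ)
    (d : EuclideanSpace ℝ (Fin n) → ℝ) (lam eta : EuclideanSpace ℝ (Fin n)) : ℝ :=
  sSup (Auchmuty c d lam eta '' K)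

/-!
Writing `L^c(λ, η, ω) = -⟨ω - λ, η⟩ - c · (d ω - d λ - ⟨∇d λ, ω - λ⟩)`, strong convexity gives
`L^c(λ, η, ω) ≤ -⟨ω - λ, η⟩ - (c m / 2) ‖ω - λ‖²`. Hence `L^c(λ, η, ·)` is bounded above, so `φ^c`
is a genuine supremum, which is `≥ L^c(λ, η, λ) = 0`, and `≤ 0` whenever `λ` solves the
variational inequality. Conversely, if `φ^c(λ, η) = 0` then `L^c(λ, η, ·)` attains its maximum
over the convex set `K` at `λ`, where its derivative is `-⟨η, ·⟩`; the first-order optimality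
condition is exactly `⟨ω - λ, η⟩ ≥ 0` for `ω ∈ K`.
-/

theorem inner_sub_mul_norm_sq_le {E : Type*} [NormedAddCommGroup E] [InnerProductSpace ℝ E]
    (u v : E) {a : ℝ} (ha : 0 < a) : ⟪u, v⟫ - a * ‖u‖ ^ 2 ≤ ‖v‖ ^ 2 / (4 * a) := by
  rw [le_div_iff₀ (by positivity)]
  nlinarith [real_inner_le_norm u v, sq_nonneg (‖v‖ - 2 * a * ‖u‖)]

section Auchmuty

variable {n : ℕ} {c m : ℝ} {d : EuclideanSpace ℝ (Fin n) → ℝ}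
  {K : Set (EuclideanSpace ℝ (Fin n))} {lam eta om : EuclideanSpace ℝ (Fin n)}

@[simp]
theorem Auchmuty_self : Auchmuty c d lam eta lam = 0 := by
  simp [Auchmuty]

theorem Auchmuty_eq :
    Auchmuty c d lam eta om =
      -⟪om - lam, eta⟫ - c * (d om - d lam - ⟪gradient d lam, om - lam⟫) := by
  rw [Auchmuty, ← neg_sub om lam, inner_neg_right, inner_sub_left, real_inner_smul_left,
    real_inner_comm eta]
  ring

theorem Auchmuty_le (hc : 0 ≤ c)
    (hstrong : d lam + ⟪gradient d lam, om - lam⟫ + m / 2 * ‖om - lam‖ ^ 2 ≤ d om) :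
    Auchmuty c d lam eta om ≤ -⟪om - lam, eta⟫ - c * (m / 2) * ‖om - lam‖ ^ 2 := by
  rw [Auchmuty_eq, mul_assoc]
  gcongr
  linarith

theorem bddAbove_range_Auchmuty (hc : 0 < c) (hm : 0 < m)
    (hstrong : ∀ om, d lam + ⟪gradient d lam, om - lam⟫ + m / 2 * ‖om - lam‖ ^ 2 ≤ d om) :
    BddAbove (Set.range (Auchmuty c d lam eta)) := by
  refine ⟨‖eta‖ ^ 2 / (4 * (c * (m / 2))), ?_⟩
  rintro _ ⟨om, rfl⟩
  calc Auchmuty c d lam eta om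
      ≤ -⟪om - lam, eta⟫ - c * (m / 2) * ‖om - lam‖ ^ 2 := Auchmuty_le hc.le (hstrong om)
    _ = ⟪lam - om, eta⟫ - c * (m / 2) * ‖lam - om‖ ^ 2 := by
      rw [← inner_neg_left, neg_sub, norm_sub_rev]
    _ ≤ ‖eta‖ ^ 2 / (4 * (c * (m / 2))) := inner_sub_mul_norm_sq_le _ _ (by positivity)

/-- The terms of `L^c(λ, η, ·)` involving `∇d λ` cancel to first order at `λ`. -/
theorem hasFDerivAt_Auchmuty (hd : DifferentiableAt ℝ d lam) :
    HasFDerivAt (Auchmuty c d lam eta) (-innerSL ℝ eta) lam := by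
  set v := eta - c • gradient d lam
  have hL := ((hd.hasFDerivAt.const_smul c).add (innerSL ℝ v).hasFDerivAt).neg.const_add
    (c * d lam + ⟪v, lam⟫)
  have hfun : Auchmuty c d lam eta =ᶠ[nhds lam]
      fun w => c * d lam + ⟪v, lam⟫ + -(c • d w + ⟪v, w⟫) :=
    Filter.Eventually.of_forall fun w => by
      simp only [Auchmuty, v, inner_sub_right, smul_eq_mul]
      ring
  replace hL := hL.congr_of_eventuallyEq hfun
  refine hL.congr_fderiv (ContinuousLinearMap.ext fun w => ?_)
  simp only [v, map_sub, map_smul, neg_add_rev, neg_sub, add_apply, sub_apply, smul_apply,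
    coe_innerSL_apply, inner_gradient_left, smul_eq_mul, neg_apply]
  ring

theorem primalGap_nonneg (hbdd : BddAbove (Set.range (Auchmuty c d lam eta))) (hlam : lam ∈ K) :
    0 ≤ primalGap K c d lam eta :=
  le_csSup (hbdd.mono (Set.image_subset_range _ _)) ⟨lam, hlam, Auchmuty_self⟩

theorem primalGap_nonpos (hc : 0 ≤ c) (hm : 0 ≤ m)
    (hstrong : ∀ om, d lam + ⟪gradient d lam, om - lam⟫ + m / 2 * ‖om - lam‖ ^ 2 ≤ d om)
    (hsol : ∀ om ∈ K, 0 ≤ ⟪om - lam, eta⟫) :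
    primalGap K c d lam eta ≤ 0 := by
  refine Real.sSup_nonpos ?_
  rintro _ ⟨om, hom, rfl⟩
  have hquad : 0 ≤ c * (m / 2) * ‖om - lam‖ ^ 2 :=
    by positivity
  linarith [Auchmuty_le (eta := eta) hc (hstrong om), hsol om hom]

theorem isMaxOn_Auchmuty_of_primalGap_nonpos
    (hbdd : BddAbove (Set.range (Auchmuty c d lam eta)))
    (h : primalGap K c d lam eta ≤ 0) : IsMaxOn (Auchmuty c d lam eta) K lam := fun om hom =>
  calc Auchmuty c d lam eta om
      ≤ primalGap K c d lam eta :=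
        le_csSup (hbdd.mono (Set.image_subset_range _ _)) ⟨om, hom, rfl⟩
    _ ≤ Auchmuty c d lam eta lam := Auchmuty_self.symm ▸ h

theorem inner_nonneg_of_isMaxOn_Auchmuty (hK : Convex ℝ K) (hlam : lam ∈ K) (hom : om ∈ K)
    (hd : DifferentiableAt ℝ d lam) (hmax : IsMaxOn (Auchmuty c d lam eta) K lam) :
    0 ≤ ⟪om - lam, eta⟫ := by
  have hcone : om - lam ∈ posTangentConeAt K lam :=
    sub_mem_posTangentConeAt_of_segment_subset (hK.segment_subset hlam hom)
  have := hmax.localize.hasFDerivWithinAt_nonpos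
    (hasFDerivAt_Auchmuty hd).hasFDerivWithinAt hcone
  simpa [real_inner_comm] using this

end Auchmuty

theorem stmt1_general {n : ℕ} (K : Set (EuclideanSpace ℝ (Fin n)))
    (hKconvex : Convex ℝ K)
    (d : EuclideanSpace ℝ (Fin n) → ℝ) (m : ℝ) (hm : 0 < m)
    (hddiff : Differentiable ℝ d)
    (hstrong : ∀ x y : EuclideanSpace ℝ (Fin n),
      d x + ⟪gradient d x, y - x⟫ + m / 2 * ‖y - x‖ ^ 2 ≤ d y)
    (c : ℝ) (hc : 0 < c) (eta : EuclideanSpace ℝ (Fin n)) :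
    (∀ lam ∈ K, 0 ≤ primalGap K c d lam eta) ∧
    (∀ lam ∈ K, (primalGap K c d lam eta = 0 ↔ ∀ om ∈ K, 0 ≤ ⟪om - lam, eta⟫)) := by
  have hbdd lam : BddAbove (Set.range (Auchmuty c d lam eta)) :=
    bddAbove_range_Auchmuty hc hm (hstrong lam)
  refine ⟨fun lam hlam => primalGap_nonneg (hbdd lam) hlam, fun lam hlam => ⟨?_, ?_⟩⟩
  · intro hzero om hom
    exact inner_nonneg_of_isMaxOn_Auchmuty hKconvex hlam hom (hddiff lam)
      (isMaxOn_Auchmuty_of_primalGap_nonpos (hbdd lam) hzero.le)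
  · intro hsol
    exact le_antisymm (primalGap_nonpos hc.le hm.le (hstrong lam) hsol)
      (primalGap_nonneg (hbdd lam) hlam)

/-- nonnegativity of the generalized primal gap function on `K`, and
`φ^c(λ, η) = 0` with `λ ∈ K` iff `λ ∈ SOL(K, η)`. -/
theorem stmt1 {n : ℕ} (hn : 0 < n) (K : Set (EuclideanSpace ℝ (Fin n)))
    (hK : K.Nonempty) (hKclosed : IsClosed K) (hKconvex : Convex ℝ K)
    (d : EuclideanSpace ℝ (Fin n) → ℝ) (m : ℝ) (hm : 0 < m)
    (hddiff : Differentiable ℝ d)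
    (hstrong : ∀ x y : EuclideanSpace ℝ (Fin n),
      d x + ⟪gradient d x, y - x⟫ + m / 2 * ‖y - x‖ ^ 2 ≤ d y)
    (c : ℝ) (hc : 0 < c) (eta : EuclideanSpace ℝ (Fin n)) :
    (∀ lam ∈ K, 0 ≤ primalGap K c d lam eta) ∧
    (∀ lam ∈ K, (primalGap K c d lam eta = 0 ↔ ∀ om ∈ K, 0 ≤ ⟪om - lam, eta⟫)) :=
  stmt1_general K hKconvex d m hm hddiff hstrong c hc eta
end

section
/- Let K ⊆ ℝ^n be a nonempty closed convex set, d : ℝ^n → ℝ a differentiable m-strongly convex function (m > 0), and b > a > 0 constants. Fix λ, η ∈ ℝ^n and let ω̂^b ∈ K be a maximizer of ω ↦ L^b(λ, η, ω) over K. Then the generalized D-gap function satisfies φ^{ab}(λ, η) ≥ (m(b − a)/2)·‖ω̂^b − λ‖². -/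
open scoped RealInnerProductSpace

lemma auchmuty_bdd {n : ℕ} (c : ℝ) (hc : 0 < c) (d : EuclideanSpace ℝ (Fin n) → ℝ)
    (m : ℝ) (hm : 0 < m)
    (hstrong : ∀ x y : EuclideanSpace ℝ (Fin n),
      d x + ⟪gradient d x, y - x⟫ + m / 2 * ‖y - x‖ ^ 2 ≤ d y)
    (lam eta : EuclideanSpace ℝ (Fin n)) (K : Set (EuclideanSpace ℝ (Fin n))) :
    BddAbove (Auchmuty c d lam eta '' K) := by
  refine ⟨‖eta‖ ^ 2 / (2 * c * m), ?_⟩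
  rintro x ⟨om, -, rfl⟩
  have hsc := hstrong lam om
  have h1 : ⟪eta, lam - om⟫ ≤ ‖eta‖ * ‖om - lam‖ := by
    calc ⟪eta, lam - om⟫ ≤ ‖eta‖ * ‖lam - om‖ := real_inner_le_norm _ _
    _ = ‖eta‖ * ‖om - lam‖ := by rw [norm_sub_rev]
  have hexp : Auchmuty c d lam eta om =
      c * d lam - c * d om + ⟪eta, lam - om⟫ + c * ⟪gradient d lam, om - lam⟫ := by
    simp only [Auchmuty, inner_sub_left, real_inner_smul_left, inner_sub_right]
    ring
  rw [hexp]
  have h2 : c * d lam - c * d om + c * ⟪gradient d lam, om - lam⟫ ≤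
      -(c * m / 2) * ‖om - lam‖ ^ 2 := by
    nlinarith [mul_le_mul_of_nonneg_left hsc hc.le]
  have h3 : ‖eta‖ * ‖om - lam‖ - c * m / 2 * ‖om - lam‖ ^ 2 ≤ ‖eta‖ ^ 2 / (2 * c * m) := by
    rw [le_div_iff₀ (by positivity)]
    nlinarith [sq_nonneg (c * m * ‖om - lam‖ - ‖eta‖)]
  linarith

/-- lower bound for the generalized D-gap function
`φ^{ab}(λ, η) ≥ (m(b − a)/2)·‖ω̂^b − λ‖²`, where `ω̂^b` maximizes `L^b(λ, η, ·)` over `K`. -/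
theorem stmt2 {n : ℕ} (hn : 0 < n) (K : Set (EuclideanSpace ℝ (Fin n)))
    (hK : K.Nonempty) (hKclosed : IsClosed K) (hKconvex : Convex ℝ K)
    (d : EuclideanSpace ℝ (Fin n) → ℝ) (m : ℝ) (hm : 0 < m)
    (hddiff : Differentiable ℝ d)
    (hstrong : ∀ x y : EuclideanSpace ℝ (Fin n),
      d x + ⟪gradient d x, y - x⟫ + m / 2 * ‖y - x‖ ^ 2 ≤ d y)
    (a b : ℝ) (ha : 0 < a) (hab : a < b)
    (lam eta omhatb : EuclideanSpace ℝ (Fin n))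
    (homhatbK : omhatb ∈ K)
    (homhatbmax : ∀ om ∈ K, Auchmuty b d lam eta om ≤ Auchmuty b d lam eta omhatb) :
    m * (b - a) / 2 * ‖omhatb - lam‖ ^ 2 ≤
      primalGap K a d lam eta - primalGap K b d lam eta := by
  have hb : primalGap K b d lam eta = Auchmuty b d lam eta omhatb := by
    apply IsGreatest.csSup_eq
    exact ⟨⟨omhatb, homhatbK, rfl⟩, by rintro x ⟨om, homK, rfl⟩; exact homhatbmax om homK⟩
  have ha' : Auchmuty a d lam eta omhatb ≤ primalGap K a d lam eta :=
    le_csSup (auchmuty_bdd a ha d m hm hstrong lam eta K) ⟨omhatb, homhatbK, rfl⟩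
  have hdiff : Auchmuty a d lam eta omhatb - Auchmuty b d lam eta omhatb =
      (b - a) * (d omhatb - d lam - ⟪gradient d lam, omhatb - lam⟫) := by
    simp only [Auchmuty, inner_sub_left, real_inner_smul_left, inner_sub_right]
    ring
  have hsc := hstrong lam omhatb
  rw [hb]
  nlinarith [sq_nonneg ‖omhatb - lam‖]
end

section
/- Let K ⊆ ℝ^n be a nonempty closed convex set, d : ℝ^n → ℝ differentiable and m-strongly convex (m > 0), and b > a > 0. Then at every feasible point of the D-gap-constraint-based reformulation the gap constraint is active and its gradient vanishes: for every (λ, η) ∈ ℝ^n × ℝ^n with φ^{ab}(λ, η) ≤ 0, one has φ^{ab}(λ, η) = 0, the point (λ, η) is a global minimizer of φ^{ab} over ℝ^n × ℝ^n, and if φ^{ab} is (Fréchet) differentiable at (λ, η) then its total derivative at (λ, η) is zero; consequently there exists no direction v ∈ ℝ^n × ℝ^n along which the directional derivative of −φ^{ab} at (λ, η) is strictly positive (so the Mangasarian–Fromovitz and linear independence constraint qualifications fail at every feasible point). -/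
open scoped RealInnerProductSpace

/-- The generalized D-gap function `φ^{ab}(λ, η) = φ^a(λ, η) − φ^b(λ, η)`. -/
noncomputable def Dgap {n : ℕ} (K : Set (EuclideanSpace ℝ (Fin n))) (a b : ℝ)
    (d : EuclideanSpace ℝ (Fin n) → ℝ) (lam eta : EuclideanSpace ℝ (Fin n)) : ℝ :=
  primalGap K a d lam eta - primalGap K b d lam eta

/-- Upper bound on Auchmuty's function under strong convexity. -/
lemma Auchmuty_le_bound {n : ℕ} (c m : ℝ) (hc : 0 < c) (hm : 0 < m)
    (d : EuclideanSpace ℝ (Fin n) → ℝ)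
    (hstrong : ∀ x y : EuclideanSpace ℝ (Fin n),
      d x + ⟪gradient d x, y - x⟫ + m / 2 * ‖y - x‖ ^ 2 ≤ d y)
    (lam eta om : EuclideanSpace ℝ (Fin n)) :
    Auchmuty c d lam eta om ≤ ‖eta‖ ^ 2 / (2 * c * m) := by
  have h := hstrong lam om
  have h1 : ⟪gradient d lam, om - lam⟫ = - ⟪gradient d lam, lam - om⟫ := by
    rw [← inner_neg_right]; congr 1; abel
  have h2 : ⟪eta - c • gradient d lam, lam - om⟫
      = ⟪eta, lam - om⟫ - c * ⟪gradient d lam, lam - om⟫ := by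
    rw [inner_sub_left, real_inner_smul_left]
  have h3 : ⟪eta, lam - om⟫ ≤ ‖eta‖ * ‖lam - om‖ := real_inner_le_norm _ _
  have h4 : ‖lam - om‖ = ‖om - lam‖ := by rw [← neg_sub, norm_neg]
  unfold Auchmuty
  rw [h1] at h
  have key : c * d lam - c * d om - c * ⟪gradient d lam, lam - om⟫
      ≤ - (c * (m / 2) * ‖om - lam‖ ^ 2) := by nlinarith [mul_le_mul_of_nonneg_left h hc.le]
  rw [h4] at h3
  have h2cm : (0:ℝ) ≤ 2 * c * m := by positivity
  rw [h2, le_div_iff₀ (by positivity)]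
  nlinarith [sq_nonneg (c * m * ‖om - lam‖ - ‖eta‖), norm_nonneg (om - lam),
    mul_le_mul_of_nonneg_right key h2cm, mul_le_mul_of_nonneg_right h3 h2cm]

/-- Pointwise monotonicity: `L^b ≤ L^a` when `a < b` under strong convexity. -/
lemma Auchmuty_mono {n : ℕ} (a b m : ℝ) (hab : a < b) (hm : 0 < m)
    (d : EuclideanSpace ℝ (Fin n) → ℝ)
    (hstrong : ∀ x y : EuclideanSpace ℝ (Fin n),
      d x + ⟪gradient d x, y - x⟫ + m / 2 * ‖y - x‖ ^ 2 ≤ d y)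
    (lam eta om : EuclideanSpace ℝ (Fin n)) :
    Auchmuty b d lam eta om ≤ Auchmuty a d lam eta om := by
  have h := hstrong lam om
  have h1 : ⟪gradient d lam, om - lam⟫ = - ⟪gradient d lam, lam - om⟫ := by
    rw [← inner_neg_right]; congr 1; abel
  rw [h1] at h
  have hs : d lam - d om - ⟪gradient d lam, lam - om⟫ ≤ 0 := by
    nlinarith [sq_nonneg ‖om - lam‖]
  have h2 : ∀ c : ℝ, ⟪eta - c • gradient d lam, lam - om⟫
      = ⟪eta, lam - om⟫ - c * ⟪gradient d lam, lam - om⟫ := by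
    intro c; rw [inner_sub_left, real_inner_smul_left]
  unfold Auchmuty
  rw [h2 a, h2 b]
  nlinarith [mul_le_mul_of_nonpos_right hab.le hs]

/-- The D-gap function is nonnegative everywhere. -/
lemma Dgap_nonneg {n : ℕ} (K : Set (EuclideanSpace ℝ (Fin n))) (hK : K.Nonempty)
    (d : EuclideanSpace ℝ (Fin n) → ℝ) (m : ℝ) (hm : 0 < m)
    (hstrong : ∀ x y : EuclideanSpace ℝ (Fin n),
      d x + ⟪gradient d x, y - x⟫ + m / 2 * ‖y - x‖ ^ 2 ≤ d y)
    (a b : ℝ) (ha : 0 < a) (hab : a < b)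
    (lam eta : EuclideanSpace ℝ (Fin n)) :
    0 ≤ Dgap K a b d lam eta := by
  have hbdd : BddAbove (Auchmuty a d lam eta '' K) := by
    refine ⟨‖eta‖ ^ 2 / (2 * a * m), ?_⟩
    rintro x ⟨om, -, rfl⟩
    exact Auchmuty_le_bound a m ha hm d hstrong lam eta om
  have hle : primalGap K b d lam eta ≤ primalGap K a d lam eta := by
    apply csSup_le (hK.image _)
    rintro x ⟨om, hom, rfl⟩
    exact le_trans (Auchmuty_mono a b m hab hm d hstrong lam eta om)
      (le_csSup hbdd ⟨om, hom, rfl⟩)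
  simpa [Dgap] using hle

/-- at every feasible point of the D-gap-constraint-based reformulation the
gap constraint is active, the point is a global minimizer of `φ^{ab}`, the total derivative
(when it exists) vanishes, and no direction of strictly positive directional derivative of
`−φ^{ab}` exists (failure of MFCQ and LICQ). -/
theorem stmt6 {n : ℕ} (hn : 0 < n) (K : Set (EuclideanSpace ℝ (Fin n)))
    (hK : K.Nonempty) (hKclosed : IsClosed K) (hKconvex : Convex ℝ K)
    (d : EuclideanSpace ℝ (Fin n) → ℝ) (m : ℝ) (hm : 0 < m)
    (hddiff : Differentiable ℝ d)
    (hstrong : ∀ x y : EuclideanSpace ℝ (Fin n),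
      d x + ⟪gradient d x, y - x⟫ + m / 2 * ‖y - x‖ ^ 2 ≤ d y)
    (a b : ℝ) (ha : 0 < a) (hab : a < b)
    (lam eta : EuclideanSpace ℝ (Fin n))
    (hfeas : Dgap K a b d lam eta ≤ 0) :
    Dgap K a b d lam eta = 0 ∧
    (∀ p : EuclideanSpace ℝ (Fin n) × EuclideanSpace ℝ (Fin n),
      Dgap K a b d lam eta ≤ Dgap K a b d p.1 p.2) ∧
    (DifferentiableAt ℝ
        (fun p : EuclideanSpace ℝ (Fin n) × EuclideanSpace ℝ (Fin n) => Dgap K a b d p.1 p.2)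
        (lam, eta) →
      fderiv ℝ
        (fun p : EuclideanSpace ℝ (Fin n) × EuclideanSpace ℝ (Fin n) => Dgap K a b d p.1 p.2)
        (lam, eta) = 0) ∧
    ¬ ∃ v : EuclideanSpace ℝ (Fin n) × EuclideanSpace ℝ (Fin n),
      0 < lineDeriv ℝ
        (fun p : EuclideanSpace ℝ (Fin n) × EuclideanSpace ℝ (Fin n) => -Dgap K a b d p.1 p.2)
        (lam, eta) v := by
  have hnn : ∀ lam' eta', 0 ≤ Dgap K a b d lam' eta' :=
    fun lam' eta' => Dgap_nonneg K hK d m hm hstrong a b ha hab lam' eta'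
  have h0 : Dgap K a b d lam eta = 0 := le_antisymm hfeas (hnn lam eta)
  have hmin : ∀ p : EuclideanSpace ℝ (Fin n) × EuclideanSpace ℝ (Fin n),
      Dgap K a b d lam eta ≤ Dgap K a b d p.1 p.2 := fun p => h0 ▸ hnn p.1 p.2
  have hlocmin : IsLocalMin
      (fun p : EuclideanSpace ℝ (Fin n) × EuclideanSpace ℝ (Fin n) => Dgap K a b d p.1 p.2)
      (lam, eta) := Filter.Eventually.of_forall hmin
  refine ⟨h0, hmin, ?_, ?_⟩
  · intro hdiff
    exact hlocmin.hasFDerivAt_eq_zero hdiff.hasFDerivAt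
  · rintro ⟨v, hv⟩
    set g : ℝ → ℝ := fun t =>
      (fun p : EuclideanSpace ℝ (Fin n) × EuclideanSpace ℝ (Fin n) => -Dgap K a b d p.1 p.2)
        ((lam, eta) + t • v) with hg
    have hv' : 0 < deriv g 0 := hv
    have hdiff : DifferentiableAt ℝ g 0 := by
      by_contra h
      rw [deriv_zero_of_not_differentiableAt h] at hv'
      exact lt_irrefl 0 hv'
    have hg0 : g 0 = 0 := by simp [hg, h0]
    have hmax : IsLocalMax g 0 := by
      apply Filter.Eventually.of_forall
      intro t
      rw [hg0]
      simp only [hg, neg_nonpos]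
      exact hnn _ _
    rw [hmax.deriv_eq_zero] at hv'
    exact lt_irrefl 0 hv'
end

section
/- Let K ⊆ ℝ^n be a nonempty closed convex set, d : ℝ^n → ℝ twice continuously differentiable and m-strongly convex (m > 0), and c > 0. For each (λ, η) let ω^c(λ, η) denote the unique maximizer of ω ↦ L^c(λ, η, ω) over K. Then the generalized primal gap function φ^c is differentiable at every (λ, η) ∈ ℝ^n × ℝ^n, with partial gradients ∇_λ φ^c(λ, η) = η − c·∇²d(λ)·(λ − ω^c(λ, η)) and ∇_η φ^c(λ, η) = λ − ω^c(λ, η), where ∇²d(λ) is the Hessian matrix of d at λ. -/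
/-!
Put `v = η - c • ∇d(λ)`. Then `L^c(λ, η, ω) = c d(λ) + ⟪v, λ⟫ - (c d(ω) + ⟪v, ω⟫)`, so
`φ^c(λ, η) = c d(λ) + ⟪v, λ⟫ - h(v)` with `h(v) = min_{ω ∈ K} (c d(ω) + ⟪v, ω⟫)`, attained at
`ω^c(λ, η)`. The objective is `c m`-strongly convex, so it grows quadratically away from its
minimizer `W(v)`; comparing the minimization problems at `u` and `v` squeezes
`h(u) - h(v) - ⟪W(v), u - v⟫` between `±‖u - v‖² / (c m)`, hence `∇h(v) = W(v)` (Danskin).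
The chain rule, with the symmetry of the Hessian of `d`, gives the two partial gradients.
-/

open scoped RealInnerProductSpace

open InnerProductSpace ContinuousLinearMap

section StrongConvexity
variable {E : Type*} [NormedAddCommGroup E] [InnerProductSpace ℝ E] {s : Set E} {m : ℝ}
  {f : E → ℝ}

lemma strongConvexOn_of_forall_add_inner_le (hs : Convex ℝ s) (g : E → E)
    (hf : ∀ x ∈ s, ∀ y ∈ s, f x + ⟪g x, y - x⟫ + m / 2 * ‖y - x‖ ^ 2 ≤ f y) :
    StrongConvexOn s m f := by
  refine ⟨hs, fun x hx y hy a b ha hb hab => ?_⟩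
  set z := a • x + b • y
  have hz : z ∈ s := hs hx hy ha hb hab
  have hxz : x - z = b • (x - y) := by
    linear_combination (norm := module) -(hab • x)
  have hyz : y - z = -(a • (x - y)) := by
    linear_combination (norm := module) -(hab • y)
  have h1 := hf z hz x hx
  have h2 := hf z hz y hy
  rw [hxz, norm_smul, inner_smul_right, Real.norm_of_nonneg hb] at h1
  rw [hyz, norm_neg, norm_smul, inner_neg_right, inner_smul_right, Real.norm_of_nonneg ha] at h2
  obtain rfl : b = 1 - a := by linarith
  simp only [smul_eq_mul]
  linarith [mul_le_mul_of_nonneg_left h1 ha, mul_le_mul_of_nonneg_left h2 hb]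

lemma StrongConvexOn.add_sq_le_of_isMinOn (hf : StrongConvexOn s m f) {w x : E} (hw : w ∈ s)
    (hmin : IsMinOn f s w) (hx : x ∈ s) : f w + m / 4 * ‖x - w‖ ^ 2 ≤ f x := by
  have hmid := hf.2 hx hw one_half_pos.le one_half_pos.le (add_halves 1)
  have hle : f w ≤ f ((1 / 2 : ℝ) • x + (1 / 2 : ℝ) • w) :=
    hmin (hf.1 hx hw one_half_pos.le one_half_pos.le (add_halves 1))
  simp only [smul_eq_mul] at hmid
  linarith
end StrongConvexity

section QuadraticGrowth
variable {E : Type*} [NormedAddCommGroup E] [InnerProductSpace ℝ E] {F : E → ℝ} {W : E → E}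
  {q : ℝ}

lemma abs_sub_sub_inner_le_of_quadratic_growth (hq : 0 < q)
    (hW : ∀ u v, F (W v) + ⟪v, W v⟫ + q * ‖W u - W v‖ ^ 2 ≤ F (W u) + ⟪v, W u⟫) (u v : E) :
    |F (W u) + ⟪u, W u⟫ - (F (W v) + ⟪v, W v⟫) - ⟪W v, u - v⟫| ≤ (4 * q)⁻¹ * ‖u - v‖ ^ 2 := by
  have hvu := hW u v
  have huv := hW v u
  have hcs : |⟪u - v, W u - W v⟫| ≤ ‖u - v‖ * ‖W u - W v‖ := abs_real_inner_le_norm _ _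
  have hamgm : ‖u - v‖ * ‖W u - W v‖ - q * ‖W u - W v‖ ^ 2 ≤ (4 * q)⁻¹ * ‖u - v‖ ^ 2 := by
    rw [← sub_nonneg]
    have : (4 * q)⁻¹ * ‖u - v‖ ^ 2 - (‖u - v‖ * ‖W u - W v‖ - q * ‖W u - W v‖ ^ 2)
        = (4 * q)⁻¹ * (‖u - v‖ - 2 * q * ‖W u - W v‖) ^ 2 := by
      field_simp; ring
    rw [this]; positivity
  simp only [inner_sub_left, inner_sub_right, real_inner_comm (W v)] at hvu huv hcs ⊢
  rw [abs_le] at hcs ⊢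
  rw [norm_sub_rev] at huv
  have hq2 : 0 ≤ q * ‖W u - W v‖ ^ 2 := by positivity
  have hbound : 0 ≤ (4 * q)⁻¹ * ‖u - v‖ ^ 2 := by positivity
  constructor <;> linarith

lemma hasGradientAt_of_quadratic_growth [CompleteSpace E] (hq : 0 < q)
    (hW : ∀ u v, F (W v) + ⟪v, W v⟫ + q * ‖W u - W v‖ ^ 2 ≤ F (W u) + ⟪v, W u⟫) (v : E) :
    HasGradientAt (fun u => F (W u) + ⟪u, W u⟫) (W v) v := by
  rw [hasGradientAt_iff_isLittleO]
  refine Asymptotics.IsBigO.trans_isLittleO (g := fun u => ‖u - v‖ ^ 2) ?_ ?_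
  · refine Asymptotics.IsBigO.of_bound (4 * q)⁻¹ (Filter.Eventually.of_forall fun u => ?_)
    rw [Real.norm_eq_abs, norm_pow, norm_norm]
    exact abs_sub_sub_inner_le_of_quadratic_growth hq hW u v
  · exact (Asymptotics.isLittleO_norm_pow_id one_lt_two).comp_tendsto
      (tendsto_sub_nhds_zero_iff.mpr Filter.tendsto_id)
end QuadraticGrowth

section Hessian
variable {E : Type*} [NormedAddCommGroup E] [InnerProductSpace ℝ E] [CompleteSpace E]
  {d : E → ℝ} {x : E}

lemma inner_fderiv_gradient_apply (u w : E) :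
    ⟪fderiv ℝ (gradient d) x u, w⟫ = fderiv ℝ (fderiv ℝ d) x u w := by
  have hgrad : gradient d = (toDual ℝ E).symm ∘ fderiv ℝ d := rfl
  rw [hgrad, LinearIsometryEquiv.comp_fderiv, comp_apply,
    LinearIsometryEquiv.coe_coe'', ← toDual_apply_apply, LinearIsometryEquiv.apply_symm_apply]

lemma ContDiffAt.isSymmetric_fderiv_gradient (hd : ContDiffAt ℝ 2 d x) :
    (fderiv ℝ (gradient d) x : E →ₗ[ℝ] E).IsSymmetric := fun u w => by
  rw [coe_coe, real_inner_comm (fderiv ℝ (gradient d) x w), inner_fderiv_gradient_apply,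
    inner_fderiv_gradient_apply, hd.isSymmSndFDerivAt (by simp)]

lemma ContDiff.differentiable_gradient (hd : ContDiff ℝ 2 d) : Differentiable ℝ (gradient d) :=
  (toDual ℝ E).symm.differentiable.comp
    ((hd.fderiv_right (m := 1) (by norm_num)).differentiable (by norm_num))
end Hessian

section PartialGradient
variable {E F : Type*} [NormedAddCommGroup E] [InnerProductSpace ℝ E]
  [NormedAddCommGroup F] [InnerProductSpace ℝ F] {f : E × F → ℝ}
  {a x : E} {b y : F}

lemma HasFDerivAt.hasGradientAt_prodMk_left [CompleteSpace E]
    (hf : HasFDerivAt f ((innerSL ℝ a).comp (fst ℝ E F) + (innerSL ℝ b).comp (snd ℝ E F)) (x, y)) :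
    HasGradientAt (fun x' => f (x', y)) a x := by
  rw [hasGradientAt_iff_hasFDerivAt]
  refine (hf.comp x (hasFDerivAt_prodMk_left (𝕜 := ℝ) x y)).congr_fderiv ?_
  ext u
  simp

lemma HasFDerivAt.hasGradientAt_prodMk_right [CompleteSpace F]
    (hf : HasFDerivAt f ((innerSL ℝ a).comp (fst ℝ E F) + (innerSL ℝ b).comp (snd ℝ E F)) (x, y)) :
    HasGradientAt (fun y' => f (x, y')) b y := by
  rw [hasGradientAt_iff_hasFDerivAt]
  refine (hf.comp y (hasFDerivAt_prodMk_right (𝕜 := ℝ) x y)).congr_fderiv ?_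
  ext u
  simp
end PartialGradient

lemma hasFDerivAt_gap_representation {E : Type*} [NormedAddCommGroup E] [InnerProductSpace ℝ E]
    [CompleteSpace E] {c : ℝ} {d h : E → ℝ} {lam eta w : E} {H : E →L[ℝ] E}
    (hd : DifferentiableAt ℝ d lam) (hH : HasFDerivAt (gradient d) H lam)
    (hHsymm : (H : E →ₗ[ℝ] E).IsSymmetric) (hh : HasGradientAt h w (eta - c • gradient d lam)) :
    HasFDerivAt
      (fun p : E × E => c * d p.1 + ⟪p.2 - c • gradient d p.1, p.1⟫ - h (p.2 - c • gradient d p.1))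
      ((innerSL ℝ (eta - c • H (lam - w))).comp (fst ℝ E E)
        + (innerSL ℝ (lam - w)).comp (snd ℝ E E)) (lam, eta) := by
  have hgrad : HasFDerivAt (fun p : E × E => gradient d p.1) (H.comp (fst ℝ E E)) (lam, eta) :=
    HasFDerivAt.comp (lam, eta) (g := gradient d) hH hasFDerivAt_fst
  have hv : HasFDerivAt (fun p : E × E => p.2 - c • gradient d p.1)
      (snd ℝ E E - c • H.comp (fst ℝ E E)) (lam, eta) :=
    hasFDerivAt_snd.sub (hgrad.fun_const_smul c)
  have hsum := (((hd.hasGradientAt.hasFDerivAt.comp (lam, eta) hasFDerivAt_fst).const_mul c).add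
    (hv.inner ℝ hasFDerivAt_fst)).sub (hh.hasFDerivAt.comp (lam, eta) hv)
  refine hsum.congr_fderiv ?_
  ext u
  · have hHu (x : E) : ⟪H u, x⟫ = ⟪H x, u⟫ := (hHsymm u x).trans (real_inner_comm _ _)
    simp [inner_sub_left, inner_smul_left, hHu, real_inner_comm (H u) w]
    ring
  · simp [real_inner_comm]

section Auchmuty
variable {n : ℕ} {K : Set (EuclideanSpace ℝ (Fin n))} {c : ℝ} {d : EuclideanSpace ℝ (Fin n) → ℝ}

lemma Auchmuty_eq_s10 (l e ω : EuclideanSpace ℝ (Fin n)) :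
    Auchmuty c d l e ω
      = c * d l + ⟪e - c • gradient d l, l⟫ - (c * d ω + ⟪e - c • gradient d l, ω⟫) := by
  rw [Auchmuty, inner_sub_right]
  ring

lemma primalGap_eq_of_isMaxOn {l e w : EuclideanSpace ℝ (Fin n)} (hw : w ∈ K)
    (hmax : IsMaxOn (Auchmuty c d l e) K w) : primalGap K c d l e = Auchmuty c d l e w :=
  IsGreatest.csSup_eq ⟨Set.mem_image_of_mem _ hw, Set.forall_mem_image.2 hmax⟩
end Auchmuty

theorem stmt10_general {n : ℕ} (K : Set (EuclideanSpace ℝ (Fin n)))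
    (hKconvex : Convex ℝ K)
    (d : EuclideanSpace ℝ (Fin n) → ℝ) (hd2 : ContDiff ℝ 2 d)
    (m : ℝ) (hm : 0 < m)
    (hstrong : ∀ x y : EuclideanSpace ℝ (Fin n),
      d x + ⟪gradient d x, y - x⟫ + m / 2 * ‖y - x‖ ^ 2 ≤ d y)
    (c : ℝ) (hc : 0 < c)
    (omc : EuclideanSpace ℝ (Fin n) → EuclideanSpace ℝ (Fin n) → EuclideanSpace ℝ (Fin n))
    (homcK : ∀ lam eta, omc lam eta ∈ K)
    (homcmax : ∀ lam eta, ∀ om ∈ K,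
      Auchmuty c d lam eta om ≤ Auchmuty c d lam eta (omc lam eta)) :
    ∀ lam eta : EuclideanSpace ℝ (Fin n),
      DifferentiableAt ℝ
        (fun p : EuclideanSpace ℝ (Fin n) × EuclideanSpace ℝ (Fin n) =>
          primalGap K c d p.1 p.2) (lam, eta) ∧
      gradient (fun l => primalGap K c d l eta) lam
        = eta - c • fderiv ℝ (gradient d) lam (lam - omc lam eta) ∧
      gradient (fun e => primalGap K c d lam e) eta = lam - omc lam eta := by
  intro lam eta
  -- The minimization problem at `(l, e)` depends only on `v = e - c • ∇d(l)`, so the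
  -- minimizers `omc lam _` at the fixed `lam` serve for every `(l, e)`.
  set W := fun v => omc lam (v + c • gradient d lam)
  have hWmin (v) : IsMinOn (fun ω => c * d ω + ⟪v, ω⟫) K (W v) := fun ω hω => by
    have := homcmax lam (v + c • gradient d lam) ω hω
    rw [Auchmuty_eq_s10, Auchmuty_eq_s10, add_sub_cancel_right] at this
    exact sub_le_sub_iff_left _ |>.mp this
  have hgap (l e) : primalGap K c d l e = c * d l + ⟪e - c • gradient d l, l⟫
      - (c * d (W (e - c • gradient d l)) + ⟪e - c • gradient d l, W (e - c • gradient d l)⟫) := by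
    rw [primalGap_eq_of_isMaxOn (homcK _ _) (isMaxOn_iff.2 fun ω hω => ?_), Auchmuty_eq_s10]
    rw [Auchmuty_eq_s10, Auchmuty_eq_s10]
    exact sub_le_sub_left (hWmin _ hω) _
  have hconvex (v) : StrongConvexOn K (c * m) (fun ω => c * d ω + ⟪v, ω⟫) :=
    strongConvexOn_of_forall_add_inner_le hKconvex (fun x => c • gradient d x + v)
      fun x _ y _ => by
        have := mul_le_mul_of_nonneg_left (hstrong x y) hc.le
        simp only [inner_add_left, real_inner_smul_left, inner_sub_right] at this ⊢
        linarith
  have hgrowth (u v) : c * d (W v) + ⟪v, W v⟫ + c * m / 4 * ‖W u - W v‖ ^ 2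
      ≤ c * d (W u) + ⟪v, W u⟫ :=
    (hconvex v).add_sq_le_of_isMinOn (homcK _ _) (hWmin v) (homcK _ _)
  have hΦ := hasFDerivAt_gap_representation (hd2.differentiable two_ne_zero lam)
    (hd2.differentiable_gradient lam).hasFDerivAt hd2.contDiffAt.isSymmetric_fderiv_gradient
    (hasGradientAt_of_quadratic_growth (F := fun ω => c * d ω) (by positivity) hgrowth
      (eta - c • gradient d lam))
  simp only [W, sub_add_cancel] at hΦ
  simp only [hgap]
  exact ⟨hΦ.differentiableAt, hΦ.hasGradientAt_prodMk_left.gradient,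
    hΦ.hasGradientAt_prodMk_right.gradient⟩

/-- differentiability of the generalized primal gap function `φ^c`, with
partial gradients `∇_λ φ^c(λ, η) = η − c·∇²d(λ)·(λ − ω^c(λ, η))` and
`∇_η φ^c(λ, η) = λ − ω^c(λ, η)`, where `ω^c(λ, η)` is the unique maximizer of
`L^c(λ, η, ·)` over `K` and `∇²d(λ) = fderiv ℝ (gradient d) λ` is the Hessian of `d`. -/
theorem stmt10 {n : ℕ} (hn : 0 < n) (K : Set (EuclideanSpace ℝ (Fin n)))
    (hK : K.Nonempty) (hKclosed : IsClosed K) (hKconvex : Convex ℝ K)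
    (d : EuclideanSpace ℝ (Fin n) → ℝ) (hd2 : ContDiff ℝ 2 d)
    (m : ℝ) (hm : 0 < m)
    (hstrong : ∀ x y : EuclideanSpace ℝ (Fin n),
      d x + ⟪gradient d x, y - x⟫ + m / 2 * ‖y - x‖ ^ 2 ≤ d y)
    (c : ℝ) (hc : 0 < c)
    (omc : EuclideanSpace ℝ (Fin n) → EuclideanSpace ℝ (Fin n) → EuclideanSpace ℝ (Fin n))
    (homcK : ∀ lam eta, omc lam eta ∈ K)
    (homcmax : ∀ lam eta, ∀ om ∈ K,
      Auchmuty c d lam eta om ≤ Auchmuty c d lam eta (omc lam eta)) :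
    ∀ lam eta : EuclideanSpace ℝ (Fin n),
      DifferentiableAt ℝ
        (fun p : EuclideanSpace ℝ (Fin n) × EuclideanSpace ℝ (Fin n) =>
          primalGap K c d p.1 p.2) (lam, eta) ∧
      gradient (fun l => primalGap K c d l eta) lam
        = eta - c • fderiv ℝ (gradient d) lam (lam - omc lam eta) ∧
      gradient (fun e => primalGap K c d lam e) eta = lam - omc lam eta :=
  stmt10_general K hKconvex d hd2 m hm hstrong c hc omc homcK homcmax
end

section
/- Let H ∈ ℝ^{n×n}, A ∈ ℝ^{p×n}, C ∈ ℝ^{q×n} be matrices, and let D_v, D_γ ∈ ℝ^{q×q} be diagonal matrices all of whose diagonal entries are strictly negative. Assume (i) A has full row rank p, and (ii) q₁ᵀ H q₁ > 0 for every nonzero q₁ ∈ ℝ^n with A q₁ = 0. Then the block matrix M = [[H, 0, Aᵀ, −Cᵀ], [A, 0, 0, 0], [C, −I_q, 0, 0], [0, D_v, 0, D_γ]] ∈ ℝ^{(n+p+2q)×(n+p+2q)} is nonsingular; equivalently, M·q = 0 implies q = 0. -/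
open Matrix

/-- nonsingularity of the KKT block matrix
`M = [[H, 0, Aᵀ, −Cᵀ], [A, 0, 0, 0], [C, −I, 0, 0], [0, D_v, 0, D_γ]]`
(stated equivalently, blockwise: `M·q = 0` implies `q = 0`), where `A` has full row rank,
`H` is positive definite on the kernel of `A`, and `D_v`, `D_γ` are diagonal with strictly
negative diagonal entries. -/
theorem stmt11 {n p q : ℕ}
    (H : Matrix (Fin n) (Fin n) ℝ) (A : Matrix (Fin p) (Fin n) ℝ)
    (C : Matrix (Fin q) (Fin n) ℝ) (Dv Dg : Matrix (Fin q) (Fin q) ℝ)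
    (hDvdiag : ∀ i j, i ≠ j → Dv i j = 0) (hDvneg : ∀ i, Dv i i < 0)
    (hDgdiag : ∀ i j, i ≠ j → Dg i j = 0) (hDgneg : ∀ i, Dg i i < 0)
    (hArank : ∀ y : Fin p → ℝ, Matrix.vecMul y A = 0 → y = 0)
    (hHred : ∀ q1 : Fin n → ℝ, q1 ≠ 0 → A.mulVec q1 = 0 → 0 < q1 ⬝ᵥ H.mulVec q1) :
    ∀ (q1 : Fin n → ℝ) (q2 : Fin q → ℝ) (q3 : Fin p → ℝ) (q4 : Fin q → ℝ),
      H.mulVec q1 + Aᵀ.mulVec q3 - Cᵀ.mulVec q4 = 0 →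
      A.mulVec q1 = 0 →
      C.mulVec q1 - q2 = 0 →
      Dv.mulVec q2 + Dg.mulVec q4 = 0 →
      q1 = 0 ∧ q2 = 0 ∧ q3 = 0 ∧ q4 = 0 := by
  intro q1 q2 q3 q4 h1 h2 h3 h4
  have hq2 : q2 = C.mulVec q1 := by
    funext i
    have := congrFun h3 i
    simp [Pi.sub_apply, sub_eq_zero] at this
    exact this.symm
  have hDvmv : ∀ x : Fin q → ℝ, ∀ i, Dv.mulVec x i = Dv i i * x i := by
    intro x i
    simp only [Matrix.mulVec, dotProduct]
    rw [Finset.sum_eq_single i]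
    · intro b _ hb; rw [hDvdiag i b (Ne.symm hb), zero_mul]
    · intro h; exact absurd (Finset.mem_univ i) h
  have hDgmv : ∀ x : Fin q → ℝ, ∀ i, Dg.mulVec x i = Dg i i * x i := by
    intro x i
    simp only [Matrix.mulVec, dotProduct]
    rw [Finset.sum_eq_single i]
    · intro b _ hb; rw [hDgdiag i b (Ne.symm hb), zero_mul]
    · intro h; exact absurd (Finset.mem_univ i) h
  have hrow : ∀ i, Dv i i * q2 i + Dg i i * q4 i = 0 := by
    intro i
    have := congrFun h4 i
    rwa [Pi.add_apply, hDvmv, hDgmv] at this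
  have hq24 : ∀ i, q2 i * q4 i ≤ 0 := by
    intro i
    have h5 : Dv i i * (q2 i * q2 i) + Dg i i * (q4 i * q2 i) = 0 := by
      linear_combination q2 i * hrow i
    nlinarith [h5, hDvneg i, hDgneg i, mul_self_nonneg (q2 i)]
  -- dot first equation with q1
  have hdot : q1 ⬝ᵥ H.mulVec q1 = q2 ⬝ᵥ q4 := by
    have h0 : q1 ⬝ᵥ (H.mulVec q1 + Aᵀ.mulVec q3 - Cᵀ.mulVec q4) = 0 := by
      rw [h1, dotProduct_zero]
    rw [dotProduct_sub, dotProduct_add] at h0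
    have hA : q1 ⬝ᵥ Aᵀ.mulVec q3 = 0 := by
      rw [dotProduct_mulVec, vecMul_transpose, h2, zero_dotProduct]
    have hC : q1 ⬝ᵥ Cᵀ.mulVec q4 = q2 ⬝ᵥ q4 := by
      rw [dotProduct_mulVec, vecMul_transpose, hq2]
    rw [hA, hC, add_zero] at h0
    linarith
  have hq1 : q1 = 0 := by
    by_contra hne
    have hpos := hHred q1 hne h2
    have hle : q2 ⬝ᵥ q4 ≤ 0 := Finset.sum_nonpos fun i _ => hq24 i
    linarith [hdot ▸ hpos]
  have hq2z : q2 = 0 := by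
    rw [hq2, hq1, mulVec_zero]
  have hq4 : q4 = 0 := by
    funext i
    have := hrow i
    rw [congrFun hq2z i] at this
    simp at this
    rcases this with h | h
    · exact absurd h (ne_of_lt (hDgneg i))
    · exact h
  have hq3 : q3 = 0 := by
    apply hArank
    have : Aᵀ.mulVec q3 = 0 := by
      have := h1
      rw [hq1, hq4, mulVec_zero, mulVec_zero, zero_add, sub_zero] at this
      exact this
    rwa [mulVec_transpose] at this
  exact ⟨hq1, hq2z, hq3, hq4⟩
end

section
/- Let T : ℝ^N × ℝ → ℝ^N be continuously differentiable, let Y : [0, ∞) → ℝ^N and s : [0, ∞) → ℝ be differentiable, and let ε_T > 0. Suppose that for each τ ≥ 0 the partial Jacobian K(τ) := ∇_Y T(Y(τ), s(τ)) ∈ ℝ^{N×N} is invertible and the trajectory satisfies the Newton-flow differential equation Y'(τ) = −K(τ)⁻¹·( ε_T·T(Y(τ), s(τ)) + ∇_s T(Y(τ), s(τ))·s'(τ) ). Then the KKT residual decays exponentially at exact rate ε_T: ‖T(Y(τ), s(τ))‖ = e^{−ε_T·τ}·‖T(Y(0), s(0))‖ for all τ ≥ 0. -/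
/-!
The residual `v τ = T (Y τ) (s τ)` satisfies `v' = -ε_T v`: by the chain rule
`v' = ∂_Y T · Y' + ∂_s T · s'`, and the Newton flow makes `∂_Y T · Y' = K Y'` cancel the
`∂_s T · s'` term, leaving `-ε_T v`. Hence `e^{ε_T τ} v τ` has zero derivative and is constant.
-/

open Real

section PartialDerivatives

variable {E F : Type*} [NormedAddCommGroup E] [NormedSpace ℝ E]
  [NormedAddCommGroup F] [NormedSpace ℝ F]

theorem hasDerivAt_comp_of_differentiableAt_uncurry {f : E → ℝ → F} {Y : ℝ → E}
    {s : ℝ → ℝ} {Y' : E} {s' t : ℝ}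
    (hf : DifferentiableAt ℝ (fun p : E × ℝ => f p.1 p.2) (Y t, s t))
    (hY : HasDerivAt Y Y' t) (hs : HasDerivAt s s' t) :
    HasDerivAt (fun u => f (Y u) (s u))
      (fderiv ℝ (fun z => f z (s t)) (Y t) Y' + s' • deriv (fun r => f (Y t) r) (s t)) t := by
  set φ := fderiv ℝ (fun p : E × ℝ => f p.1 p.2) (Y t, s t)
  have hφ : HasFDerivAt (fun p : E × ℝ => f p.1 p.2) φ (Y t, s t) := hf.hasFDerivAt
  have hfY : fderiv ℝ (fun z => f z (s t)) (Y t) = φ.comp (ContinuousLinearMap.inl ℝ E ℝ) := by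
    have := hφ.comp (Y t) (hasFDerivAt_prodMk_left (𝕜 := ℝ) (Y t) (s t))
    exact this.fderiv
  have hfs : deriv (fun r => f (Y t) r) (s t) = φ (0, 1) :=
    (hφ.comp_hasDerivAt (s t) ((hasDerivAt_const _ (Y t)).prodMk (hasDerivAt_id _))).deriv
  have hsplit : ((Y', s') : E × ℝ) = (Y', 0) + s' • (0, 1) := by simp
  rw [hfY, hfs]
  refine (hφ.comp_hasDerivAt t (hY.prodMk hs)).congr_deriv ?_
  rw [hsplit, map_add, map_smul]
  rfl

theorem hasDerivAt_residual_of_newtonFlow {f : E → ℝ → E} {Y : ℝ → E} {s : ℝ → ℝ} {s' c t : ℝ}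
    (K : E ≃L[ℝ] E)
    (hf : DifferentiableAt ℝ (fun p : E × ℝ => f p.1 p.2) (Y t, s t))
    (hK : (K : E →L[ℝ] E) = fderiv ℝ (fun z => f z (s t)) (Y t))
    (hY : HasDerivAt Y (-(K.symm (c • f (Y t) (s t) + s' • deriv (fun r => f (Y t) r) (s t)))) t)
    (hs : HasDerivAt s s' t) :
    HasDerivAt (fun u => f (Y u) (s u)) (-(c • f (Y t) (s t))) t := by
  convert hasDerivAt_comp_of_differentiableAt_uncurry hf hY hs using 1
  rw [← hK, ContinuousLinearEquiv.coe_coe, map_neg, K.apply_symm_apply]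
  abel

end PartialDerivatives

theorem eq_exp_smul_of_hasDerivAt_neg_smul {E : Type*} [NormedAddCommGroup E] [NormedSpace ℝ E]
    {v : ℝ → E} {c : ℝ} (hv : ∀ t, 0 ≤ t → HasDerivAt v (-(c • v t)) t) {τ : ℝ} (hτ : 0 ≤ τ) :
    v τ = exp (-c * τ) • v 0 := by
  set g : ℝ → E := fun t => exp (c * t) • v t
  have hg : ∀ t, 0 ≤ t → HasDerivAt g 0 t := by
    intro t ht
    have hexp : HasDerivAt (fun t => exp (c * t)) (exp (c * t) * c) t := by
      simpa using ((hasDerivAt_id t).const_mul c).exp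
    refine (hexp.smul (hv t ht)).congr_deriv ?_
    module
  have hconst : g τ = g 0 :=
    constant_of_has_deriv_right_zero (fun x hx => (hg x hx.1).continuousAt.continuousWithinAt)
      (fun x hx => (hg x hx.1).hasDerivWithinAt) τ (Set.right_mem_Icc.2 hτ)
  calc v τ = exp (-c * τ) • g τ := by simp only [g, smul_smul, ← exp_add]; ring_nf; simp
    _ = exp (-c * τ) • v 0 := by simp [hconst, g]

theorem stmt13_general {N : ℕ}
    (T : EuclideanSpace ℝ (Fin N) → ℝ → EuclideanSpace ℝ (Fin N))
    (hT : ContDiff ℝ 1 (fun p : EuclideanSpace ℝ (Fin N) × ℝ => T p.1 p.2))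
    (Y : ℝ → EuclideanSpace ℝ (Fin N)) (s s' : ℝ → ℝ)
    (hs : ∀ τ : ℝ, 0 ≤ τ → HasDerivAt s (s' τ) τ)
    (εT : ℝ)
    (hflow : ∀ τ : ℝ, 0 ≤ τ →
      ∃ Kτ : EuclideanSpace ℝ (Fin N) ≃L[ℝ] EuclideanSpace ℝ (Fin N),
        (Kτ : EuclideanSpace ℝ (Fin N) →L[ℝ] EuclideanSpace ℝ (Fin N)) =
          fderiv ℝ (fun Z => T Z (s τ)) (Y τ) ∧
        HasDerivAt Y
          (-(Kτ.symm (εT • T (Y τ) (s τ) + s' τ • deriv (fun σ => T (Y τ) σ) (s τ)))) τ) :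
    ∀ τ : ℝ, 0 ≤ τ →
      ‖T (Y τ) (s τ)‖ = Real.exp (-εT * τ) * ‖T (Y 0) (s 0)‖ := by
  intro τ hτ
  have hresidual : ∀ t, 0 ≤ t → HasDerivAt (fun u => T (Y u) (s u)) (-(εT • T (Y t) (s t))) t := by
    intro t ht
    obtain ⟨K, hK, hY⟩ := hflow t ht
    exact hasDerivAt_residual_of_newtonFlow K (hT.differentiable one_ne_zero _) hK hY (hs t ht)
  rw [eq_exp_smul_of_hasDerivAt_neg_smul hresidual hτ, norm_smul, norm_of_nonneg (exp_pos _).le]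

/-- along the fictitious-time Newton flow
`Y'(τ) = −K(τ)⁻¹·(ε_T·T(Y(τ), s(τ)) + ∇_s T(Y(τ), s(τ))·s'(τ))`, with
`K(τ) = ∇_Y T(Y(τ), s(τ))` invertible, the KKT residual decays exponentially at exact
rate `ε_T`: `‖T(Y(τ), s(τ))‖ = e^{−ε_T τ}·‖T(Y(0), s(0))‖` for all `τ ≥ 0`. -/
theorem stmt13 {N : ℕ}
    (T : EuclideanSpace ℝ (Fin N) → ℝ → EuclideanSpace ℝ (Fin N))
    (hT : ContDiff ℝ 1 (fun p : EuclideanSpace ℝ (Fin N) × ℝ => T p.1 p.2))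
    (Y : ℝ → EuclideanSpace ℝ (Fin N)) (s s' : ℝ → ℝ)
    (hs : ∀ τ : ℝ, 0 ≤ τ → HasDerivAt s (s' τ) τ)
    (εT : ℝ) (hεT : 0 < εT)
    (hflow : ∀ τ : ℝ, 0 ≤ τ →
      ∃ Kτ : EuclideanSpace ℝ (Fin N) ≃L[ℝ] EuclideanSpace ℝ (Fin N),
        (Kτ : EuclideanSpace ℝ (Fin N) →L[ℝ] EuclideanSpace ℝ (Fin N)) =
          fderiv ℝ (fun Z => T Z (s τ)) (Y τ) ∧
        HasDerivAt Y
          (-(Kτ.symm (εT • T (Y τ) (s τ) + s' τ • deriv (fun σ => T (Y τ) σ) (s τ)))) τ) :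
    ∀ τ : ℝ, 0 ≤ τ →
      ‖T (Y τ) (s τ)‖ = Real.exp (-εT * τ) * ‖T (Y 0) (s 0)‖ :=
  stmt13_general T hT Y s s' hs εT hflow
end

section
/- Let K ⊆ ℝ^n be a nonempty convex set, d : ℝ^n → ℝ convex and differentiable, and c > 0. If λ̂ ∈ K satisfies ⟨ω − λ̂, η̂⟩ ≥ 0 for all ω ∈ K (i.e. λ̂ ∈ SOL(K, η̂)), then L^c(λ̂, η̂, ω) ≤ 0 for all ω ∈ K; consequently sup_{ω ∈ K} L^c(λ̂, η̂, ω) = 0, and the supremum is attained at ω = λ̂. -/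
open scoped RealInnerProductSpace

/-- if `λ̂ ∈ SOL(K, η̂)` for a nonempty convex `K` and a convex
differentiable `d`, then `L^c(λ̂, η̂, ω) ≤ 0` for all `ω ∈ K`; consequently
`sup_{ω ∈ K} L^c(λ̂, η̂, ω) = 0`, and the supremum is attained at `ω = λ̂`. -/
theorem stmt16 {n : ℕ} (hn : 0 < n) (K : Set (EuclideanSpace ℝ (Fin n)))
    (hK : K.Nonempty) (hKconvex : Convex ℝ K)
    (d : EuclideanSpace ℝ (Fin n) → ℝ)
    (hddiff : Differentiable ℝ d)
    (hdconvex : ∀ x y : EuclideanSpace ℝ (Fin n),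
      d x + ⟪gradient d x, y - x⟫ ≤ d y)
    (c : ℝ) (hc : 0 < c)
    (lamhat etahat : EuclideanSpace ℝ (Fin n))
    (hlamhatK : lamhat ∈ K)
    (hVI : ∀ om ∈ K, 0 ≤ ⟪om - lamhat, etahat⟫) :
    (∀ om ∈ K, Auchmuty c d lamhat etahat om ≤ 0) ∧
    sSup (Auchmuty c d lamhat etahat '' K) = 0 ∧
    Auchmuty c d lamhat etahat lamhat = 0 := by
  have hle : ∀ om ∈ K, Auchmuty c d lamhat etahat om ≤ 0 := by
    intro om hom
    have h1 := hdconvex lamhat om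
    have h2 := hVI om hom
    have key : Auchmuty c d lamhat etahat om =
        c * (d lamhat + ⟪gradient d lamhat, om - lamhat⟫ - d om)
          - ⟪om - lamhat, etahat⟫ := by
      simp only [Auchmuty, inner_sub_left, inner_sub_right, real_inner_smul_left,
        real_inner_comm lamhat etahat, real_inner_comm om etahat,
        real_inner_comm lamhat (gradient d lamhat)]
      ring
    rw [key]
    have : c * (d lamhat + ⟪gradient d lamhat, om - lamhat⟫ - d om) ≤ 0 :=
      mul_nonpos_of_nonneg_of_nonpos hc.le (by linarith)
    linarith
  have hzero : Auchmuty c d lamhat etahat lamhat = 0 := by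
    simp [Auchmuty]
  refine ⟨hle, ?_, hzero⟩
  apply le_antisymm
  · apply csSup_le (hK.image _)
    rintro x ⟨om, hom, rfl⟩
    exact hle om hom
  · have : (0 : ℝ) ∈ Auchmuty c d lamhat etahat '' K := ⟨lamhat, hlamhatK, hzero⟩
    exact le_csSup ⟨0, by rintro x ⟨om, hom, rfl⟩; exact hle om hom⟩ this
end

section
/- Let K ⊆ ℝ^n be a nonempty convex set, d : ℝ^n → ℝ differentiable, and c > 0. If λ* ∈ K satisfies L^c(λ*, η*, ω) ≤ 0 for all ω ∈ K, then λ* solves the variational inequality: ⟨ω − λ*, η*⟩ ≥ 0 for all ω ∈ K. -/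
open scoped RealInnerProductSpace

noncomputable def auchmutyPotential {E : Type*} [NormedAddCommGroup E] [InnerProductSpace ℝ E]
    [CompleteSpace E] (c : ℝ) (d : E → ℝ) (lam eta : E) (om : E) : ℝ :=
  c * d om + ⟪eta - c • gradient d lam, om⟫

theorem auchmuty_eq_sub_auchmutyPotential {n : ℕ} (c : ℝ) (d : EuclideanSpace ℝ (Fin n) → ℝ)
    (lam eta om : EuclideanSpace ℝ (Fin n)) :
    Auchmuty c d lam eta om =
      auchmutyPotential c d lam eta lam - auchmutyPotential c d lam eta om := by
  rw [Auchmuty, auchmutyPotential, auchmutyPotential, inner_sub_right]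
  ring

theorem hasFDerivAt_auchmutyPotential {E : Type*} [NormedAddCommGroup E] [InnerProductSpace ℝ E]
    [CompleteSpace E] (c : ℝ) {d : E → ℝ} {lam : E} (hd : DifferentiableAt ℝ d lam) (eta : E) :
    HasFDerivAt (auchmutyPotential c d lam eta) (innerSL ℝ eta) lam := by
  have hpot := ((hd.hasGradientAt.hasFDerivAt).const_mul c).add
    (innerSL ℝ (eta - c • gradient d lam)).hasFDerivAt
  refine hpot.congr_fderiv ?_
  ext v
  simp

theorem stmt17_general {n : ℕ} (K : Set (EuclideanSpace ℝ (Fin n)))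
    (hKconvex : Convex ℝ K)
    (d : EuclideanSpace ℝ (Fin n) → ℝ)
    (hddiff : Differentiable ℝ d)
    (c : ℝ)
    (lamstar etastar : EuclideanSpace ℝ (Fin n))
    (hlamstarK : lamstar ∈ K)
    (hL : ∀ om ∈ K, Auchmuty c d lamstar etastar om ≤ 0) :
    ∀ om ∈ K, 0 ≤ ⟪om - lamstar, etastar⟫ := by
  intro om hom
  have hmin : IsMinOn (auchmutyPotential c d lamstar etastar) K lamstar := fun w hw => by
    simpa [auchmuty_eq_sub_auchmutyPotential, sub_nonpos] using hL w hw
  have hfirstOrder := hmin.localize.hasFDerivWithinAt_nonneg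
    (hasFDerivAt_auchmutyPotential c (hddiff lamstar) etastar).hasFDerivWithinAt
    (sub_mem_posTangentConeAt_of_segment_subset (hKconvex.segment_subset hlamstarK hom))
  simpa [real_inner_comm] using hfirstOrder

/-- if `λ* ∈ K` satisfies `L^c(λ*, η*, ω) ≤ 0` for all `ω ∈ K`, with `K`
nonempty convex and `d` differentiable, then `λ*` solves the variational inequality:
`⟨ω − λ*, η*⟩ ≥ 0` for all `ω ∈ K`. -/
theorem stmt17 {n : ℕ} (hn : 0 < n) (K : Set (EuclideanSpace ℝ (Fin n)))
    (hK : K.Nonempty) (hKconvex : Convex ℝ K)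
    (d : EuclideanSpace ℝ (Fin n) → ℝ)
    (hddiff : Differentiable ℝ d)
    (c : ℝ) (hc : 0 < c)
    (lamstar etastar : EuclideanSpace ℝ (Fin n))
    (hlamstarK : lamstar ∈ K)
    (hL : ∀ om ∈ K, Auchmuty c d lamstar etastar om ≤ 0) :
    ∀ om ∈ K, 0 ≤ ⟪om - lamstar, etastar⟫ :=
  stmt17_general K hKconvex d hddiff c lamstar etastar hlamstarK hL
end
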